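/- arXiv:1610.07005 — 3 statements merged into one kernel-verified Lean document; each statement's English description precedes it below -/
import Mathlib

section
/- For n ≥ 3, the action of GL₁(ℂ)² × SL_n(ℂ) on ℂⁿ ⊕ (ℂⁿ)* given by (s,t,g) · (x,y) = (s·gx, t·(g⁻¹)ᵀy) has a Zariski-dense orbit, namely the set of pairs (x,y) with ⟨x|y⟩ ≠ 0, and the dual pairing f(x,y) = ⟨x|y⟩ is a relative invariant with f((s,t,g)·(x,y)) = st·f(x,y). -/
/-!
The pairing is invariant because `(g⁻¹)ᵀ` is the contragredient of `g`. A pair `(x, y)` with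
`⟨x|y⟩ ≠ 0` splits `ℂⁿ` as `ℂ x ⊕ ker ⟨·|y⟩`; matching these splittings for two such pairs gives
`A ∈ GL_n(ℂ)` carrying one pair to the other up to scalars, and since `ℂ` is algebraically closed,
`A` is a scalar multiple of an element of `SL_n(ℂ)`. A polynomial vanishing where `⟨x|y⟩ ≠ 0` is
annihilated by the nonzero pairing polynomial, hence is zero.
-/

open Matrix MvPolynomial

open Module LinearMap in
theorem Module.Dual.isCompl_ker_span_singleton {K V : Type*} [Field K] [AddCommGroup V]
    [Module K V] [FiniteDimensional K V] {f : Dual K V} {v : V} (hv : f v ≠ 0) :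
    IsCompl (ker f) (K ∙ v) := by
  have hv0 : v ≠ 0 := by rintro rfl; simp at hv
  refine isCompl_ker_of_disjoint_of_ne_bot (by rintro rfl; simp at hv) ?_ ?_
  · rwa [Submodule.disjoint_span_singleton' hv0, mem_ker]
  · rwa [Ne, Submodule.span_singleton_eq_bot]

open Module LinearMap in
theorem Module.Dual.exists_linearEquiv_apply_eq_comp_eq {K V : Type*} [Field K] [AddCommGroup V]
    [Module K V] [FiniteDimensional K V] {f f' : Dual K V} {v v' : V} (hv : f v ≠ 0)
    (hv' : f' v' ≠ 0) :
    ∃ e : V ≃ₗ[K] V, e v = v' ∧ f' ∘ₗ e = (f' v' / f v) • f := by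
  have hv0 : v ≠ 0 := by rintro rfl; simp at hv
  have hv0' : v' ≠ 0 := by rintro rfl; simp at hv'
  have hc := isCompl_ker_span_singleton hv
  have hc' := isCompl_ker_span_singleton hv'
  have hker : finrank K (ker f) = finrank K (ker f') := by
    have := finrank_ker_add_one_of_ne_zero (f := f) (by rintro rfl; simp at hv)
    have := finrank_ker_add_one_of_ne_zero (f := f') (by rintro rfl; simp at hv')
    omega
  let eLine : (K ∙ v) ≃ₗ[K] (K ∙ v') := (LinearEquiv.toSpanNonzeroSingleton K V v hv0).symm ≪≫ₗ
    LinearEquiv.toSpanNonzeroSingleton K V v' hv0'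
  let e := (Submodule.prodEquivOfIsCompl _ _ hc).symm ≪≫ₗ
    (LinearEquiv.ofFinrankEq _ _ hker).prodCongr eLine ≪≫ₗ Submodule.prodEquivOfIsCompl _ _ hc'
  have he_v : e v = v' := by
    have := Submodule.prodEquivOfIsCompl_symm_apply_right _ _ hc
      (⟨v, Submodule.mem_span_singleton_self v⟩ : K ∙ v)
    simp [e, eLine, this, LinearEquiv.coord_self K V v hv0]
  have he_ker : ∀ w ∈ ker f, f' (e w) = 0 := by
    intro w hw
    have := Submodule.prodEquivOfIsCompl_symm_apply_left _ _ hc (⟨w, hw⟩ : ker f)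
    simp [e, this]
  refine ⟨e, he_v, ?_⟩
  ext w
  obtain ⟨k, hk, u, hu, rfl⟩ :=
    Submodule.mem_sup.1 (hc.sup_eq_top ▸ Submodule.mem_top : w ∈ ker f ⊔ (K ∙ v))
  obtain ⟨a, rfl⟩ := Submodule.mem_span_singleton.1 hu
  simp [he_v, he_ker k hk, mem_ker.1 hk]
  field_simp

namespace Matrix

variable {ι K : Type*} [Fintype ι] [DecidableEq ι] [Field K]

theorem exists_isUnit_det_mulVec_eq_vecMul_eq {x y x' y' : ι → K} (h : x ⬝ᵥ y ≠ 0)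
    (h' : x' ⬝ᵥ y' ≠ 0) :
    ∃ A : Matrix ι ι K, IsUnit A.det ∧ A *ᵥ x = x' ∧ y' ᵥ* A = (x' ⬝ᵥ y' / x ⬝ᵥ y) • y := by
  obtain ⟨e, hex, hey⟩ := Module.Dual.exists_linearEquiv_apply_eq_comp_eq
    (f := dotProductEquiv K ι y) (f' := dotProductEquiv K ι y') (v := x) (v' := x')
    (by simpa [dotProduct_comm] using h) (by simpa [dotProduct_comm] using h')
  refine ⟨LinearMap.toMatrix' e, ?_, ?_, ?_⟩
  · rw [LinearMap.det_toMatrix']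
    exact e.isUnit_det'
  · rw [LinearMap.toMatrix'_mulVec, LinearEquiv.coe_coe, hex]
  · ext j
    have := LinearMap.congr_fun hey (Pi.single j 1)
    simp only [dotProductEquiv_apply_apply, LinearMap.coe_comp, LinearEquiv.coe_coe,
      Function.comp_apply, LinearMap.smul_apply, dotProduct_single, mul_one, smul_eq_mul] at this
    rw [← dotProduct_single_one (y' ᵥ* _) j, ← dotProduct_mulVec, LinearMap.toMatrix'_mulVec,
      LinearEquiv.coe_coe, this, dotProduct_comm x', dotProduct_comm x]
    simp

theorem mulVec_dotProduct_inv_transpose_mulVec {R : Type*} [CommRing R] {g : Matrix ι ι R}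
    (hg : IsUnit g.det) (x y : ι → R) : (g *ᵥ x) ⬝ᵥ ((g⁻¹)ᵀ *ᵥ y) = x ⬝ᵥ y := by
  rw [dotProduct_mulVec, vecMul_transpose, mulVec_mulVec, nonsing_inv_mul _ hg, one_mulVec]

theorem exists_smul_specialLinearGroup [IsAlgClosed K] [Nonempty ι] {A : Matrix ι ι K}
    (hA : IsUnit A.det) :
    ∃ (c : Kˣ) (g : SpecialLinearGroup ι K), A = (c : K) • (g : Matrix ι ι K) := by
  obtain ⟨r, hr⟩ := IsAlgClosed.exists_pow_nat_eq A.det (Fintype.card_pos (α := ι))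
  have hr0 : r ≠ 0 := by
    rintro rfl
    exact hA.ne_zero (by rw [← hr, zero_pow Fintype.card_ne_zero])
  refine ⟨Units.mk0 r hr0, ⟨r⁻¹ • A, ?_⟩, ?_⟩
  · rw [det_smul, inv_pow, hr, inv_mul_cancel₀ hA.ne_zero]
  · simp [smul_smul, mul_inv_cancel₀ hr0]

theorem exists_specialLinearGroup_smul_eq [IsAlgClosed K] [Nonempty ι] {x y x' y' : ι → K}
    (h : x ⬝ᵥ y ≠ 0) (h' : x' ⬝ᵥ y' ≠ 0) :
    ∃ (s t : Kˣ) (g : SpecialLinearGroup ι K),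
      x' = (s : K) • (g.1 *ᵥ x) ∧ y' = (t : K) • ((g.1⁻¹)ᵀ *ᵥ y) := by
  obtain ⟨A, hA, hAx, hAy⟩ := exists_isUnit_det_mulVec_eq_vecMul_eq h h'
  obtain ⟨c, g, rfl⟩ := exists_smul_specialLinearGroup hA
  have hg : IsUnit g.1.det := by simp
  have hgy : y' ᵥ* g = ((c⁻¹ : Kˣ) * (x' ⬝ᵥ y' / x ⬝ᵥ y) : K) • y := by
    rw [vecMul_smul] at hAy
    rw [mul_smul, ← hAy, smul_smul, Units.inv_mul, one_smul]
  refine ⟨c, c⁻¹ * Units.mk0 _ (div_ne_zero h' h), g, by rw [← hAx, smul_mulVec], ?_⟩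
  calc y' = (y' ᵥ* g) ᵥ* (g : Matrix ι ι K)⁻¹ := by
        rw [vecMul_vecMul, mul_nonsing_inv _ hg, vecMul_one]
    _ = _ := by rw [hgy, smul_vecMul, mulVec_transpose, Units.val_mul, Units.val_mk0]

end Matrix

theorem MvPolynomial.eq_zero_of_eval_eq_zero_of_eval_ne_zero {R σ : Type*} [CommRing R]
    [IsDomain R] [Infinite R] {F P : MvPolynomial σ R} (hF : F ≠ 0)
    (hP : ∀ z, eval z F ≠ 0 → eval z P = 0) : P = 0 := by
  have hFP : F * P = 0 := MvPolynomial.funext fun z => by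
    by_cases hz : eval z F = 0 <;> simp [hz, hP]
  exact (mul_eq_zero.1 hFP).resolve_left hF

noncomputable def pairingPoly (ι R : Type*) [Fintype ι] [CommSemiring R] :
    MvPolynomial (ι ⊕ ι) R :=
  ∑ i, X (Sum.inl i) * X (Sum.inr i)

section pairingPoly

variable {ι R : Type*} [Fintype ι] [CommSemiring R]

@[simp]
theorem eval_sumElim_pairingPoly (x y : ι → R) :
    eval (Sum.elim x y) (pairingPoly ι R) = x ⬝ᵥ y := by
  simp [pairingPoly, dotProduct]

theorem pairingPoly_ne_zero [Nonempty ι] [Nontrivial R] : pairingPoly ι R ≠ 0 := by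
  classical
  intro h
  obtain ⟨i⟩ := ‹Nonempty ι›
  simpa [h] using eval_sumElim_pairingPoly (Pi.single i (1 : R)) (Pi.single i 1)

theorem eq_zero_of_eval_sumElim_eq_zero_of_dotProduct_ne_zero {K : Type*} [CommRing K]
    [IsDomain K] [Infinite K] [Nonempty ι] {P : MvPolynomial (ι ⊕ ι) K}
    (hP : ∀ x y : ι → K, x ⬝ᵥ y ≠ 0 → eval (Sum.elim x y) P = 0) : P = 0 := by
  refine MvPolynomial.eq_zero_of_eval_eq_zero_of_eval_ne_zero pairingPoly_ne_zero fun z hz => ?_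
  simpa using hP (z ∘ Sum.inl) (z ∘ Sum.inr)
    (by rwa [← eval_sumElim_pairingPoly, Sum.elim_comp_inl_inr])

end pairingPoly

/-- Ks I-1: the action of `GL₁² × SL n` on `ℂⁿ ⊕ (ℂⁿ)*` given by
`(s, t, g) · (x, y) = (s • g x, t • (g⁻¹)ᵀ y)` (for `n ≥ 3`) has the dual
pairing as a relative invariant with character `s t`, the set where the
pairing is nonzero is a single orbit, and that set is Zariski-dense. -/
theorem ks_I_1_prehomogeneous (n : ℕ) (hn : 3 ≤ n) :
    (∀ (s t : ℂˣ) (g : SpecialLinearGroup (Fin n) ℂ) (x y : Fin n → ℂ),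
      (∑ i, ((s : ℂ) • (g.1 *ᵥ x)) i * ((t : ℂ) • ((g.1⁻¹)ᵀ *ᵥ y)) i)
        = (s : ℂ) * (t : ℂ) * ∑ i, x i * y i) ∧
    (∀ x y x' y' : Fin n → ℂ,
      (∑ i, x i * y i) ≠ 0 → (∑ i, x' i * y' i) ≠ 0 →
      ∃ (s t : ℂˣ) (g : SpecialLinearGroup (Fin n) ℂ),
        x' = (s : ℂ) • (g.1 *ᵥ x) ∧ y' = (t : ℂ) • ((g.1⁻¹)ᵀ *ᵥ y)) ∧
    (∀ P : MvPolynomial (Fin n ⊕ Fin n) ℂ,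
      (∀ x y : Fin n → ℂ, (∑ i, x i * y i) ≠ 0 → eval (Sum.elim x y) P = 0) →
      ∀ x y : Fin n → ℂ, eval (Sum.elim x y) P = 0) := by
  have : Nonempty (Fin n) := ⟨⟨0, by omega⟩⟩
  refine ⟨fun s t g x y => ?_, fun x y x' y' h h' => exists_specialLinearGroup_smul_eq h h',
    fun P hP x y => ?_⟩
  · change ((s : ℂ) • (g.1 *ᵥ x)) ⬝ᵥ ((t : ℂ) • ((g.1⁻¹)ᵀ *ᵥ y)) = s * t * (x ⬝ᵥ y)
    rw [smul_dotProduct, dotProduct_smul, mulVec_dotProduct_inv_transpose_mulVec (by simp),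
      smul_eq_mul, smul_eq_mul, mul_assoc]
  · rw [eq_zero_of_eval_sumElim_eq_zero_of_dotProduct_ne_zero hP, map_zero]
end

section
/- For the action of GL₁(ℂ)² × SL_n(ℂ) on Sym²ℂⁿ ⊕ (ℂⁿ)* by (s,t,g)·(A,y) = (s·gAgᵀ, t·(g⁻¹)ᵀy), the polynomials f₁(A,y) = det(A) and f₂(A,y) = yᵀAy are relative invariants, and the connected stabilizer of the generic point (I, e₁*) is isomorphic to SO_{n-1}(ℂ). -/
/-!
The two invariance statements are direct computations: `det g = 1`, and `gᵀ (g⁻¹)ᵀ = 1` cancels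
in the quadratic form.

On the stabilizer of `(I, e₁*)` the scalars satisfy `sⁿ = 1` and `s t² = 1`, so they take finitely
many values and are trivial on the identity component; there `g gᵀ = 1` and `g e₁ = e₁`, which
forces `g = diag(1, h)` with `h ∈ SO(n-1, ℂ)`. Conversely `SO(m, ℂ)` is path connected: by
Cartan–Dieudonné each of its elements is a product of an even number of reflections in anisotropic
vectors, and `r_v r_w` is joined to `r_v r_v = 1` by moving `w` to `v` through anisotropic vectors,
which is possible since on a complex line the isotropic vectors are the roots of a quadratic
polynomial.
-/

open Matrix

/-- The subspace topology on `SL n ℂ` inside the matrix space. -/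
noncomputable instance (n : Type*) [DecidableEq n] [Fintype n] :
    TopologicalSpace (Matrix.SpecialLinearGroup n ℂ) :=
  TopologicalSpace.induced (fun g => (g : Matrix n n ℂ)) inferInstance

namespace Matrix

variable {ι : Type*} [Fintype ι]

section CommRing

variable [DecidableEq ι] {R : Type*} [CommRing R]

variable (ι R) in
/-- Orthogonality for `x ⬝ᵥ y`: Mathlib's `orthogonalGroup` is defined through `star`, which on
`ℂ` is conjugation. -/
def dotOrthogonal : Submonoid (Matrix ι ι R) where
  carrier := {g | g * gᵀ = 1}
  one_mem' := by simp
  mul_mem' {a b} ha hb := by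
    change a * b * (a * b)ᵀ = 1
    rw [transpose_mul, Matrix.mul_assoc, ← Matrix.mul_assoc b, hb, Matrix.one_mul, ha]

variable (ι R) in
def dotSpecialOrthogonal : Submonoid (Matrix ι ι R) where
  carrier := {g | g * gᵀ = 1 ∧ g.det = 1}
  one_mem' := by simp
  mul_mem' {a b} ha hb := ⟨(dotOrthogonal ι R).mul_mem ha.1 hb.1, by simp [ha.2, hb.2]⟩

theorem mem_dotOrthogonal_iff {g : Matrix ι ι R} : g ∈ dotOrthogonal ι R ↔ g * gᵀ = 1 :=
  Iff.rfl

theorem mem_dotSpecialOrthogonal_iff {g : Matrix ι ι R} :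
    g ∈ dotSpecialOrthogonal ι R ↔ g * gᵀ = 1 ∧ g.det = 1 :=
  Iff.rfl

theorem mem_dotOrthogonal_iff' {g : Matrix ι ι R} : g ∈ dotOrthogonal ι R ↔ gᵀ * g = 1 :=
  mul_eq_one_comm

theorem transpose_mem_dotOrthogonal {g : Matrix ι ι R} (hg : g ∈ dotOrthogonal ι R) :
    gᵀ ∈ dotOrthogonal ι R := by
  change gᵀ * gᵀᵀ = 1
  rwa [transpose_transpose, ← mem_dotOrthogonal_iff']

theorem dotProduct_mulVec_mulVec {g : Matrix ι ι R} (hg : g ∈ dotOrthogonal ι R) (x y : ι → R) :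
    (g *ᵥ x) ⬝ᵥ (g *ᵥ y) = x ⬝ᵥ y := by
  rw [dotProduct_mulVec, vecMul_mulVec, mem_dotOrthogonal_iff'.1 hg, vecMul_one]

end CommRing

section Field

variable [DecidableEq ι] {K : Type*} [Field K]

noncomputable def reflectionMatrix (v : ι → K) : Matrix ι ι K :=
  1 - (2 / (v ⬝ᵥ v)) • vecMulVec v v

theorem transpose_reflectionMatrix (v : ι → K) : (reflectionMatrix v)ᵀ = reflectionMatrix v := by
  rw [reflectionMatrix, transpose_sub, transpose_one, transpose_smul, transpose_vecMulVec]

theorem reflectionMatrix_mulVec (v x : ι → K) :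
    reflectionMatrix v *ᵥ x = x - (2 * (v ⬝ᵥ x) / (v ⬝ᵥ v)) • v := by
  rw [reflectionMatrix, sub_mulVec, one_mulVec, smul_mulVec, vecMulVec_mulVec, op_smul_eq_smul,
    smul_smul]
  congr 2
  ring

theorem reflectionMatrix_mulVec_of_dotProduct_eq_zero {v x : ι → K} (h : v ⬝ᵥ x = 0) :
    reflectionMatrix v *ᵥ x = x := by
  simp [reflectionMatrix_mulVec, h]

theorem reflectionMatrix_mulVec_self {v : ι → K} (hv : v ⬝ᵥ v ≠ 0) :
    reflectionMatrix v *ᵥ v = -v := by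
  rw [reflectionMatrix_mulVec, mul_div_assoc, div_self hv, mul_one, two_smul]
  abel

theorem reflectionMatrix_sub_mulVec {u w : ι → K} (h : u ⬝ᵥ u = w ⬝ᵥ w)
    (huw : (u - w) ⬝ᵥ (u - w) ≠ 0) : reflectionMatrix (u - w) *ᵥ w = u := by
  have key : 2 * ((u - w) ⬝ᵥ w) = -((u - w) ⬝ᵥ (u - w)) := by
    simp only [sub_dotProduct, dotProduct_sub, dotProduct_comm w u, h]
    ring
  rw [reflectionMatrix_mulVec, key, neg_div, div_self huw, neg_one_smul, sub_neg_eq_add,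
    add_sub_cancel]

theorem reflectionMatrix_mul_self {v : ι → K} (hv : v ⬝ᵥ v ≠ 0) :
    reflectionMatrix v * reflectionMatrix v = 1 := by
  refine ext_iff_mulVec.2 fun x => ?_
  rw [← mulVec_mulVec, one_mulVec, reflectionMatrix_mulVec v x, mulVec_sub, mulVec_smul,
    reflectionMatrix_mulVec_self hv, reflectionMatrix_mulVec, smul_neg, sub_neg_eq_add,
    sub_add_cancel]

theorem reflectionMatrix_mem_dotOrthogonal {v : ι → K} (hv : v ⬝ᵥ v ≠ 0) :
    reflectionMatrix v ∈ dotOrthogonal ι K := by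
  change _ * _ = _
  rw [transpose_reflectionMatrix, reflectionMatrix_mul_self hv]

theorem det_reflectionMatrix {v : ι → K} (hv : v ⬝ᵥ v ≠ 0) : (reflectionMatrix v).det = -1 := by
  have h : reflectionMatrix v
      = 1 + replicateCol Unit ((-(2 / (v ⬝ᵥ v))) • v) * replicateRow Unit v := by
    rw [reflectionMatrix, sub_eq_add_neg, replicateCol_smul, Matrix.smul_mul, ← vecMulVec_eq,
      neg_smul]
  rw [h, det_one_add_replicateCol_mul_replicateRow, dotProduct_smul, smul_eq_mul, dotProduct_comm,
    neg_mul, div_mul_cancel₀ _ hv]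
  norm_num

section CartanDieudonne

variable [NeZero (2 : K)]

theorem exists_reflections_mulVec_eq {u w : ι → K} (h : u ⬝ᵥ u = w ⬝ᵥ w) (hw : w ⬝ᵥ w ≠ 0) :
    ∃ P : List (ι → K), (∀ v ∈ P, v ⬝ᵥ v ≠ 0) ∧ (P.map reflectionMatrix).prod *ᵥ w = u ∧
      ∀ x, u ⬝ᵥ x = 0 → w ⬝ᵥ x = 0 → (P.map reflectionMatrix).prod *ᵥ x = x := by
  by_cases huw : (u - w) ⬝ᵥ (u - w) = 0
  · have huw' : (u + w) ⬝ᵥ (u + w) ≠ 0 := by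
      have hsum : (u - w) ⬝ᵥ (u - w) + (u + w) ⬝ᵥ (u + w) = (2 * 2) * (w ⬝ᵥ w) := by
        simp only [sub_dotProduct, dotProduct_sub, add_dotProduct, dotProduct_add, h,
          dotProduct_comm u w]
        ring
      rw [huw, zero_add] at hsum
      rw [hsum]
      exact mul_ne_zero (mul_ne_zero two_ne_zero two_ne_zero) hw
    have hneg : u + w = u - -w := (sub_neg_eq_add u w).symm
    refine ⟨[u + w, w], List.forall_mem_cons.2 ⟨huw', List.forall_mem_singleton.2 hw⟩, ?_,
      fun x hux hwx => ?_⟩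
    · rw [List.map_cons, List.map_singleton, List.prod_cons, List.prod_singleton, ← mulVec_mulVec,
        reflectionMatrix_mulVec_self hw, hneg]
      exact reflectionMatrix_sub_mulVec (by rw [h, neg_dotProduct_neg]) (hneg ▸ huw')
    · rw [List.map_cons, List.map_singleton, List.prod_cons, List.prod_singleton, ← mulVec_mulVec,
        reflectionMatrix_mulVec_of_dotProduct_eq_zero hwx,
        reflectionMatrix_mulVec_of_dotProduct_eq_zero (by rw [add_dotProduct, hux, hwx, add_zero])]
  · refine ⟨[u - w], by simpa using huw, by simpa using reflectionMatrix_sub_mulVec h huw,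
      fun x hux hwx => ?_⟩
    simpa using
      reflectionMatrix_mulVec_of_dotProduct_eq_zero (by rw [sub_dotProduct, hux, hwx, sub_zero])

theorem exists_reflections_eq_of_mulVec_single (s : Finset ι) :
    ∀ g ∈ dotOrthogonal ι K, (∀ j ∉ s, g *ᵥ Pi.single j 1 = Pi.single j 1) →
      ∃ L : List (ι → K), (∀ v ∈ L, v ⬝ᵥ v ≠ 0) ∧ g = (L.map reflectionMatrix).prod := by
  induction s using Finset.induction_on with
  | empty =>
    intro g _ hg
    exact ⟨[], by simp, ext_of_mulVec_single fun j => by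
      rw [hg j (Finset.notMem_empty j), List.map_nil, List.prod_nil, one_mulVec]⟩
  | insert a s _ ih =>
    intro g hg hfix
    set e : ι → K := Pi.single a 1
    obtain ⟨P, hP, hPe, hPfix⟩ := exists_reflections_mulVec_eq (u := g *ᵥ e) (w := e)
      (dotProduct_mulVec_mulVec hg e e) (by simp [e])
    set r := (P.map reflectionMatrix).prod
    have hr : r ∈ dotOrthogonal ι K := Submonoid.list_prod_mem _ <| by
      simpa using fun v hv => reflectionMatrix_mem_dotOrthogonal (hP v hv)
    have hrTr : ∀ x, rᵀ *ᵥ (r *ᵥ x) = x := fun x => by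
      rw [mulVec_mulVec, mem_dotOrthogonal_iff'.1 hr, one_mulVec]
    obtain ⟨L, hL, hgL⟩ := ih (rᵀ * g) ((dotOrthogonal ι K).mul_mem
      (transpose_mem_dotOrthogonal hr) hg) fun j hj => by
      rw [← mulVec_mulVec]
      by_cases hja : j = a
      · rw [hja, ← hPe, hrTr]
      · have hj' : j ∉ insert a s := by simp [hja, hj]
        have hej : e ⬝ᵥ Pi.single j 1 = 0 := by simp [e, hja]
        have hrj : r *ᵥ Pi.single j 1 = Pi.single j 1 :=
          hPfix _ (by rw [← hfix j hj', dotProduct_mulVec_mulVec hg, hej]) hej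
        simpa only [hfix j hj', hrj] using hrTr (Pi.single j 1)
    refine ⟨P ++ L, fun v hv => (List.mem_append.1 hv).elim (hP v) (hL v), ?_⟩
    rw [List.map_append, List.prod_append, ← hgL, ← Matrix.mul_assoc, mem_dotOrthogonal_iff.1 hr,
      Matrix.one_mul]

/-- Cartan–Dieudonné for the bilinear form `x ⬝ᵥ y`. -/
theorem exists_reflections_eq {g : Matrix ι ι K} (hg : g ∈ dotOrthogonal ι K) :
    ∃ L : List (ι → K), (∀ v ∈ L, v ⬝ᵥ v ≠ 0) ∧ g = (L.map reflectionMatrix).prod :=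
  exists_reflections_eq_of_mulVec_single Finset.univ g hg (by simp)

end CartanDieudonne

end Field

section Complex

/-- On the complex line through `w` and `v`, the isotropic points are the roots of a nonzero
quadratic polynomial, and the complement of a finite subset of `ℂ` is path connected. -/
theorem joinedIn_setOf_dotProduct_self_ne_zero {v w : ι → ℂ} (hv : v ⬝ᵥ v ≠ 0)
    (hw : w ⬝ᵥ w ≠ 0) : JoinedIn {u : ι → ℂ | u ⬝ᵥ u ≠ 0} w v := by
  open Polynomial in
  set f : ℂ → ι → ℂ := fun z => w + z • (v - w)
  set p : ℂ[X] := C ((v - w) ⬝ᵥ (v - w)) * X ^ 2 + C (2 * (w ⬝ᵥ (v - w))) * X + C (w ⬝ᵥ w)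
  have hp : ∀ z, p.eval z = f z ⬝ᵥ f z := fun z => by
    simp only [p, f, eval_add, eval_mul, eval_pow, eval_C, eval_X, dotProduct_add, add_dotProduct,
      dotProduct_smul, smul_dotProduct, smul_eq_mul, dotProduct_comm (v - w) w]
    ring
  have hp0 : p ≠ 0 := fun h => hw <| by simpa [hp, f] using congrArg (eval 0) h
  have hroots : IsPathConnected {z | p.IsRoot z}ᶜ :=
    (finite_setOfPred_isRoot hp0).countable.isPathConnected_compl_of_one_lt_rank <| by
      rw [Complex.rank_real_complex]; exact Nat.one_lt_ofNat
  have hf : Continuous f := continuous_const.add (continuous_id.smul continuous_const)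
  have hγ := (hroots.joinedIn 0 (by simpa [IsRoot, hp, f] using hw) 1
    (by simpa [IsRoot, hp, f] using hv)).map hf
  have hf0 : f 0 = w := by simp [f]
  have hf1 : f 1 = v := by simp [f]
  rw [hf0, hf1] at hγ
  refine hγ.mono ?_
  rintro _ ⟨z, hz, rfl⟩
  rw [Set.mem_ofPred_eq, ← hp]
  exact hz

variable [DecidableEq ι]

theorem continuousOn_reflectionMatrix :
    ContinuousOn (reflectionMatrix : (ι → ℂ) → Matrix ι ι ℂ) {v | v ⬝ᵥ v ≠ 0} :=
  continuousOn_const.sub <|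
    (continuousOn_const.div (continuous_id.dotProduct continuous_id).continuousOn
      fun _ hv => hv).smul (continuous_id.matrix_vecMulVec continuous_id).continuousOn

theorem joinedIn_reflectionMatrix_mul_reflectionMatrix {v w : ι → ℂ} (hv : v ⬝ᵥ v ≠ 0)
    (hw : w ⬝ᵥ w ≠ 0) :
    JoinedIn (dotSpecialOrthogonal ι ℂ) (reflectionMatrix v * reflectionMatrix w) 1 := by
  have h := (joinedIn_setOf_dotProduct_self_ne_zero hv hw).map_continuousOn
    (f := fun u => reflectionMatrix v * reflectionMatrix u)
    (continuousOn_const.mul continuousOn_reflectionMatrix)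
  simp only [reflectionMatrix_mul_self hv] at h
  refine h.mono ?_
  rintro _ ⟨u, hu, rfl⟩
  refine ⟨(dotOrthogonal ι ℂ).mul_mem (reflectionMatrix_mem_dotOrthogonal hv)
    (reflectionMatrix_mem_dotOrthogonal hu), ?_⟩
  rw [det_mul, det_reflectionMatrix hv, det_reflectionMatrix hu]
  norm_num

theorem joinedIn_prod_reflectionMatrix :
    ∀ L : List (ι → ℂ), (∀ v ∈ L, v ⬝ᵥ v ≠ 0) → (L.map reflectionMatrix).prod.det = 1 →
      JoinedIn (dotSpecialOrthogonal ι ℂ) (L.map reflectionMatrix).prod 1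
  | [] => fun _ _ => JoinedIn.refl (dotSpecialOrthogonal ι ℂ).one_mem
  | [v] => fun hL hdet => by
      rw [List.map_singleton, List.prod_singleton, det_reflectionMatrix (hL v (by simp))] at hdet
      norm_num at hdet
  | v :: w :: L => fun hL hdet => by
      have hv : v ⬝ᵥ v ≠ 0 := hL v (by simp)
      have hw : w ⬝ᵥ w ≠ 0 := hL w (by simp)
      have hsplit : ((v :: w :: L).map reflectionMatrix).prod
          = (reflectionMatrix v * reflectionMatrix w) * (L.map reflectionMatrix).prod := by
        simp [Matrix.mul_assoc]
      rw [hsplit, det_mul, det_mul, det_reflectionMatrix hv, det_reflectionMatrix hw] at hdet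
      rw [hsplit, ← (dotSpecialOrthogonal ι ℂ).coe_mul_self_eq, ← Matrix.mul_one (1 : Matrix ι ι ℂ)]
      exact (joinedIn_reflectionMatrix_mul_reflectionMatrix hv hw).mul
        (joinedIn_prod_reflectionMatrix L (fun u hu => hL u (by simp [hu])) (by simpa using hdet))

theorem isPathConnected_dotSpecialOrthogonal :
    IsPathConnected (dotSpecialOrthogonal ι ℂ : Set (Matrix ι ι ℂ)) := by
  refine ⟨1, (dotSpecialOrthogonal ι ℂ).one_mem, fun {g} hg => ?_⟩
  obtain ⟨L, hL, rfl⟩ := exists_reflections_eq hg.1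
  exact (joinedIn_prod_reflectionMatrix L hL hg.2).symm

end Complex

theorem sum_elim_one_zero_eq_single {n R : Type*} [DecidableEq n] [CommRing R] :
    (Sum.elim (fun _ => 1) (fun _ => 0) : Fin 1 ⊕ n → R) = Pi.single (Sum.inl 0) 1 := by
  ext (i | i)
  · simp [Fin.fin_one_eq_zero i]
  · simp

section Blocks

variable {n R : Type*} [Fintype n] [DecidableEq n] [CommRing R]

theorem fromBlocks_one_mulVec_single (h : Matrix n n R) :
    (fromBlocks 1 0 0 h : Matrix (Fin 1 ⊕ n) (Fin 1 ⊕ n) R) *ᵥ Pi.single (Sum.inl 0) 1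
      = Pi.single (Sum.inl 0) 1 := by
  rw [mulVec_single_one]
  ext (i | i)
  · simp [Fin.fin_one_eq_zero i]
  · simp

theorem eq_fromBlocks_one_of_mulVec_single {g : Matrix (Fin 1 ⊕ n) (Fin 1 ⊕ n) R}
    (hg : g *ᵥ Pi.single (Sum.inl 0) 1 = Pi.single (Sum.inl 0) 1)
    (hgT : gᵀ *ᵥ Pi.single (Sum.inl 0) 1 = Pi.single (Sum.inl 0) 1) :
    g = fromBlocks 1 0 0 g.toBlocks₂₂ := by
  rw [mulVec_single_one] at hg hgT
  ext (i | i) (j | j)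
  · simpa [Fin.fin_one_eq_zero i, Fin.fin_one_eq_zero j] using congrFun hg (Sum.inl 0)
  · simpa [Fin.fin_one_eq_zero i] using congrFun hgT (Sum.inr j)
  · simpa [Fin.fin_one_eq_zero j] using congrFun hg (Sum.inr i)
  · rfl

theorem fromBlocks_one_mem_dotSpecialOrthogonal_iff {h : Matrix n n R} :
    fromBlocks 1 0 0 h ∈ dotSpecialOrthogonal (Fin 1 ⊕ n) R ↔ h ∈ dotSpecialOrthogonal n R := by
  simp only [mem_dotSpecialOrthogonal_iff, fromBlocks_transpose, fromBlocks_multiply,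
    det_fromBlocks_zero₂₁, ← fromBlocks_one, fromBlocks_inj]
  simp

end Blocks

theorem dotProduct_mulVec_smul_conj_smul_inv_transpose {n R : Type*} [Fintype n] [DecidableEq n]
    [CommRing R] (s t : R) {g : Matrix n n R} (hg : IsUnit g.det) (A : Matrix n n R)
    (y : n → R) :
    (t • ((g⁻¹)ᵀ *ᵥ y)) ⬝ᵥ ((s • (g * A * gᵀ)) *ᵥ (t • ((g⁻¹)ᵀ *ᵥ y)))
      = s * t ^ 2 * (y ⬝ᵥ (A *ᵥ y)) := by
  have hy : gᵀ *ᵥ ((g⁻¹)ᵀ *ᵥ y) = y := by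
    rw [mulVec_mulVec, ← transpose_mul, nonsing_inv_mul g hg, transpose_one, one_mulVec]
  rw [smul_mulVec, mulVec_smul, smul_dotProduct, dotProduct_smul, dotProduct_smul, ← mulVec_mulVec,
    ← mulVec_mulVec, hy, dotProduct_mulVec, ← mulVec_transpose, hy, smul_eq_mul, smul_eq_mul,
    smul_eq_mul]
  ring

end Matrix

def genericStabilizer (n : Type*) [Fintype n] [DecidableEq n] :
    Set (ℂˣ × ℂˣ × SpecialLinearGroup (Fin 1 ⊕ n) ℂ) :=
  {p | (p.1 : ℂ) • (p.2.2.1 * 1 * p.2.2.1ᵀ) = 1 ∧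
    (p.2.1 : ℂ) • ((p.2.2.1⁻¹)ᵀ *ᵥ Sum.elim (fun _ => (1 : ℂ)) (fun _ => 0))
      = Sum.elim (fun _ => (1 : ℂ)) (fun _ => 0)}

def embeddedSpecialOrthogonal (n : Type*) [Fintype n] [DecidableEq n] :
    Set (ℂˣ × ℂˣ × SpecialLinearGroup (Fin 1 ⊕ n) ℂ) :=
  {p | p.1 = 1 ∧ p.2.1 = 1 ∧
    ∃ h : Matrix n n ℂ, h * hᵀ = 1 ∧ h.det = 1 ∧ p.2.2.1 = fromBlocks 1 0 0 h}

section GenericStabilizer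

variable {n : Type*} [Fintype n] [DecidableEq n]

theorem one_mem_genericStabilizer : 1 ∈ genericStabilizer n := by
  simp [genericStabilizer]

theorem pow_eq_one_of_mem_genericStabilizer {p} (hp : p ∈ genericStabilizer n) :
    (p.1 : ℂ) ^ (Fintype.card n + 1) = 1 ∧ (p.2.1 : ℂ) ^ (2 * (Fintype.card n + 1)) = 1 := by
  obtain ⟨hA, hy⟩ := hp
  have hs : (p.1 : ℂ) ^ (Fintype.card n + 1) = 1 := by
    simpa [det_smul, add_comm, p.2.2.2] using congrArg det hA
  have hst : (p.1 : ℂ) * (p.2.1 : ℂ) ^ 2 = 1 := by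
    have := dotProduct_mulVec_smul_conj_smul_inv_transpose (p.1 : ℂ) (p.2.1 : ℂ)
      (g := p.2.2.1) (by rw [p.2.2.2]; exact isUnit_one) 1
      (Sum.elim (fun _ => (1 : ℂ)) (fun _ => 0))
    rw [hy, hA, sum_elim_one_zero_eq_single] at this
    simpa using this.symm
  refine ⟨hs, ?_⟩
  have := congrArg (· ^ (Fintype.card n + 1)) hst
  rwa [mul_pow, hs, one_mul, one_pow, ← pow_mul] at this

theorem scalars_eq_one_of_mem_connectedComponentIn {p}
    (hp : p ∈ connectedComponentIn (genericStabilizer n) 1) : p.1 = 1 ∧ p.2.1 = 1 := by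
  set k := Fintype.card n + 1
  have : NeZero k := ⟨Nat.add_one_ne_zero _⟩
  have hT : IsDiscrete ((rootsOfUnity k ℂ : Set ℂˣ) ×ˢ (rootsOfUnity (2 * k) ℂ : Set ℂˣ)) :=
    ((Set.finite_coe_iff.1 (inferInstanceAs (Finite (rootsOfUnity k ℂ)))).prod
      (Set.finite_coe_iff.1 (inferInstanceAs (Finite (rootsOfUnity (2 * k) ℂ))))).isDiscrete
  have h := isPreconnected_connectedComponentIn.constant_of_mapsTo hT
    (f := fun q : ℂˣ × ℂˣ × SpecialLinearGroup (Fin 1 ⊕ n) ℂ => (q.1, q.2.1)) (by fun_prop)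
    (fun q hq => by
      obtain ⟨hs, ht⟩ := pow_eq_one_of_mem_genericStabilizer (connectedComponentIn_subset _ _ hq)
      exact ⟨(mem_rootsOfUnity' _ _).2 hs, (mem_rootsOfUnity' _ _).2 ht⟩)
    hp (mem_connectedComponentIn one_mem_genericStabilizer)
  simpa [Prod.ext_iff] using h

theorem connectedComponentIn_genericStabilizer_subset :
    connectedComponentIn (genericStabilizer n) 1 ⊆ embeddedSpecialOrthogonal n := by
  intro p hp
  obtain ⟨hs, ht⟩ := scalars_eq_one_of_mem_connectedComponentIn hp
  obtain ⟨hA, hy⟩ := connectedComponentIn_subset _ _ hp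
  set g := p.2.2.1
  simp only [hs, ht, Units.val_one, one_smul, Matrix.mul_one, sum_elim_one_zero_eq_single] at hA hy
  rw [inv_eq_right_inv hA, transpose_transpose] at hy
  have hgT : gᵀ *ᵥ Pi.single (Sum.inl 0) 1 = Pi.single (Sum.inl 0) 1 := by
    conv_lhs => rw [← hy, mulVec_mulVec, mem_dotOrthogonal_iff'.1 hA, one_mulVec]
  have hblock := eq_fromBlocks_one_of_mulVec_single hy hgT
  have hSO : g.toBlocks₂₂ ∈ dotSpecialOrthogonal n ℂ :=
    fromBlocks_one_mem_dotSpecialOrthogonal_iff.1 (by rw [← hblock]; exact ⟨hA, p.2.2.2⟩)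
  exact ⟨hs, ht, g.toBlocks₂₂, hSO.1, hSO.2, hblock⟩

theorem embeddedSpecialOrthogonal_subset_connectedComponentIn :
    embeddedSpecialOrthogonal n ⊆ connectedComponentIn (genericStabilizer n) 1 := by
  let ψ : dotSpecialOrthogonal n ℂ → ℂˣ × ℂˣ × SpecialLinearGroup (Fin 1 ⊕ n) ℂ := fun h =>
    (1, 1, ⟨fromBlocks 1 0 0 h, (fromBlocks_one_mem_dotSpecialOrthogonal_iff.2 h.2).2⟩)
  have hψ : Continuous ψ := continuous_const.prodMk <| continuous_const.prodMk <|
    continuous_induced_rng.2 <| continuous_const.matrix_fromBlocks continuous_const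
      continuous_const continuous_subtype_val
  have := isPathConnected_iff_pathConnectedSpace.1
    (isPathConnected_dotSpecialOrthogonal (ι := n))
  have hrange : Set.range ψ ⊆ connectedComponentIn (genericStabilizer n) 1 := by
    refine (isPreconnected_range hψ).subset_connectedComponentIn
      ⟨1, Prod.ext rfl <| Prod.ext rfl <| Subtype.ext fromBlocks_one⟩ ?_
    rintro _ ⟨h, rfl⟩
    have hO := (fromBlocks_one_mem_dotSpecialOrthogonal_iff.2 h.2).1
    refine ⟨by simpa [ψ] using hO, ?_⟩
    simp only [Units.val_one, one_smul, sum_elim_one_zero_eq_single, ψ]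
    rw [inv_eq_right_inv hO, transpose_transpose, fromBlocks_one_mulVec_single]
  rintro p ⟨hs, ht, h, hO, hdet, hg⟩
  exact hrange ⟨⟨h, hO, hdet⟩, Prod.ext hs.symm (Prod.ext ht.symm (Subtype.ext hg.symm))⟩

end GenericStabilizer

theorem ks_I_12_generic_isotropy_general (m : ℕ) :
    (∀ (s : ℂˣ) (g : SpecialLinearGroup (Fin 1 ⊕ Fin m) ℂ)
        (A : Matrix (Fin 1 ⊕ Fin m) (Fin 1 ⊕ Fin m) ℂ), A.IsSymm →
      ((s : ℂ) • (g.1 * A * g.1ᵀ)).det = (s : ℂ) ^ (m + 1) * A.det) ∧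
    (∀ (s t : ℂˣ) (g : SpecialLinearGroup (Fin 1 ⊕ Fin m) ℂ)
        (A : Matrix (Fin 1 ⊕ Fin m) (Fin 1 ⊕ Fin m) ℂ) (y : Fin 1 ⊕ Fin m → ℂ),
      A.IsSymm →
      ((t : ℂ) • ((g.1⁻¹)ᵀ *ᵥ y)) ⬝ᵥ
          (((s : ℂ) • (g.1 * A * g.1ᵀ)) *ᵥ ((t : ℂ) • ((g.1⁻¹)ᵀ *ᵥ y)))
        = (s : ℂ) * (t : ℂ) ^ 2 * (y ⬝ᵥ (A *ᵥ y))) ∧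
    connectedComponentIn
        {p : ℂˣ × ℂˣ × SpecialLinearGroup (Fin 1 ⊕ Fin m) ℂ |
          (p.1 : ℂ) • (p.2.2.1 * 1 * p.2.2.1ᵀ) = (1 : Matrix (Fin 1 ⊕ Fin m) (Fin 1 ⊕ Fin m) ℂ) ∧
          (p.2.1 : ℂ) • ((p.2.2.1⁻¹)ᵀ *ᵥ Sum.elim (fun _ => (1 : ℂ)) (fun _ => 0))
            = Sum.elim (fun _ => (1 : ℂ)) (fun _ => 0)} 1
      = {p : ℂˣ × ℂˣ × SpecialLinearGroup (Fin 1 ⊕ Fin m) ℂ |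
          p.1 = 1 ∧ p.2.1 = 1 ∧
          ∃ h : Matrix (Fin m) (Fin m) ℂ, h * hᵀ = 1 ∧ h.det = 1 ∧
            p.2.2.1 = Matrix.fromBlocks 1 0 0 h} := by
  refine ⟨fun s g A _ => ?_, fun s t g A y _ => ?_, ?_⟩
  · rw [det_smul, det_mul, det_mul, det_transpose, g.2, Fintype.card_sum, Fintype.card_fin,
      Fintype.card_fin]
    ring
  · exact dotProduct_mulVec_smul_conj_smul_inv_transpose _ _ (by simp [g.2]) A y
  · exact connectedComponentIn_genericStabilizer_subset.antisymm
      embeddedSpecialOrthogonal_subset_connectedComponentIn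

/-- Ks I-12 (with `n = m + 1 ≥ 3`, coordinates split as `ℂⁿ = ℂ ⊕ ℂᵐ`):
for the action of `GL₁² × SL n` on `Sym² ℂⁿ ⊕ (ℂⁿ)*` by
`(s, t, g) · (A, y) = (s • g A gᵀ, t • (g⁻¹)ᵀ y)`, the polynomials
`f₁(A, y) = det A` and `f₂(A, y) = yᵀ A y` are relative invariants (with
characters `sⁿ` and `s t²`), and the connected component of the identity in
the stabilizer of the generic point `(I, e₁*)` is the copy of `SO (n-1) ℂ`
embedded as `g = fromBlocks 1 0 0 h`. -/
theorem ks_I_12_generic_isotropy (m : ℕ) (hm : 2 ≤ m) :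
    (∀ (s : ℂˣ) (g : SpecialLinearGroup (Fin 1 ⊕ Fin m) ℂ)
        (A : Matrix (Fin 1 ⊕ Fin m) (Fin 1 ⊕ Fin m) ℂ), A.IsSymm →
      ((s : ℂ) • (g.1 * A * g.1ᵀ)).det = (s : ℂ) ^ (m + 1) * A.det) ∧
    (∀ (s t : ℂˣ) (g : SpecialLinearGroup (Fin 1 ⊕ Fin m) ℂ)
        (A : Matrix (Fin 1 ⊕ Fin m) (Fin 1 ⊕ Fin m) ℂ) (y : Fin 1 ⊕ Fin m → ℂ),
      A.IsSymm →
      ((t : ℂ) • ((g.1⁻¹)ᵀ *ᵥ y)) ⬝ᵥ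
          (((s : ℂ) • (g.1 * A * g.1ᵀ)) *ᵥ ((t : ℂ) • ((g.1⁻¹)ᵀ *ᵥ y)))
        = (s : ℂ) * (t : ℂ) ^ 2 * (y ⬝ᵥ (A *ᵥ y))) ∧
    connectedComponentIn
        {p : ℂˣ × ℂˣ × SpecialLinearGroup (Fin 1 ⊕ Fin m) ℂ |
          (p.1 : ℂ) • (p.2.2.1 * 1 * p.2.2.1ᵀ) = (1 : Matrix (Fin 1 ⊕ Fin m) (Fin 1 ⊕ Fin m) ℂ) ∧
          (p.2.1 : ℂ) • ((p.2.2.1⁻¹)ᵀ *ᵥ Sum.elim (fun _ => (1 : ℂ)) (fun _ => 0))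
            = Sum.elim (fun _ => (1 : ℂ)) (fun _ => 0)} 1
      = {p : ℂˣ × ℂˣ × SpecialLinearGroup (Fin 1 ⊕ Fin m) ℂ |
          p.1 = 1 ∧ p.2.1 = 1 ∧
          ∃ h : Matrix (Fin m) (Fin m) ℂ, h * hᵀ = 1 ∧ h.det = 1 ∧
            p.2.2.1 = Matrix.fromBlocks 1 0 0 h} :=
  ks_I_12_generic_isotropy_general m
end

section
/- For the module (GL₁² × SL_{2n}(ℂ)) acting on ⋀²ℂ^{2n} ⊕ ℂ^{2n} by (s,t,g)·(A,x) = (s·gAgᵀ, t·gx) (alternating matrices with congruence action plus the standard vector action), the Pfaffian f(A,x) = Pf(A) is a relative invariant, and the generic stabilizer contains a subgroup isomorphic to Sp_{2n−2}(ℂ); in particular the set {(A,x) | Pf(A) ≠ 0, x ≠ 0} contains a dense orbit. -/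
/-!
The Pfaffian is the alternation of `r ↦ ∏ᵢ ω(r (inl i), r (inr i))`, `ω` the form of `J`,
normalized at `J`. By uniqueness of alternating forms, `Pf (M B Mᵀ) = det M · Pf B`; since every
alternating matrix is `M J Mᵀ`, this gives `Pf² = det` and the relative invariance.

The stabilizer of `(J, e)`, with `e` a basis vector of a hyperbolic plane, contains `Sp_{2n-2}`
acting block-diagonally on the symplectic complement of that plane. The orbit of `(J, e)` is
all of `{(A, x) | A alternating, det A ≠ 0, x ≠ 0}`: write `A = N J Nᵀ`, use that symplectic
transvections act transitively on nonzero vectors, and absorb `det N` into the scalars through a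
`2n`-th root. A polynomial vanishing on this orbit vanishes at every alternating `(A, x)`: on the
line `ε ↦ (A + ε J, x + ε w)` it vanishes at all but finitely many points.
-/

open Matrix MvPolynomial

open Equiv Sum

namespace Matrix

section JMatrix

variable {l : Type*} [DecidableEq l] (R : Type*) [CommRing R] (i j : l)

@[simp] lemma J_inl_inl : J l R (inl i) (inl j) = 0 := by simp [J]
@[simp] lemma J_inr_inr : J l R (inr i) (inr j) = 0 := by simp [J]
@[simp] lemma J_inl_inr : J l R (inl i) (inr j) = -(1 : Matrix l l R) i j := by simp [J]
@[simp] lemma J_inr_inl : J l R (inr i) (inl j) = (1 : Matrix l l R) i j := by simp [J]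

lemma eq_swap_of_J_apply_ne_zero {x y : l ⊕ l} (h : J l R x y ≠ 0) : y = x.swap := by
  rcases x with i | i <;> rcases y with j | j <;> by_cases hij : i = j <;> simp_all

lemma mul_J_mul_transpose {n : Type*} [Fintype l] (M : Matrix n (l ⊕ l) R) :
    M * J l R * Mᵀ =
      ∑ i, (vecMulVec (Mᵀ (inr i)) (Mᵀ (inl i)) -
        vecMulVec (Mᵀ (inl i)) (Mᵀ (inr i))) := by
  ext a b
  simp [mul_apply, Fintype.sum_sum_type, J, one_apply, sum_apply, vecMulVec_apply,
    Finset.sum_sub_distrib, ← sub_eq_add_neg]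

end JMatrix

section PairUpdate

variable {l V M : Type*} [Fintype l] [DecidableEq l] [DecidableEq (l ⊕ l)] [CommMonoid M]

lemma prod_update_inl (f : V → V → M) (r : l ⊕ l → V) (a : l) (z : V) :
    ∏ i, f (Function.update r (inl a) z (inl i)) (Function.update r (inl a) z (inr i)) =
      f z (r (inr a)) * ∏ i ∈ Finset.univ.erase a, f (r (inl i)) (r (inr i)) := by
  rw [← Finset.mul_prod_erase _ _ (Finset.mem_univ a)]
  congr 1
  · simp
  · refine Finset.prod_congr rfl fun i hi => ?_
    simp [Finset.ne_of_mem_erase hi]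

lemma prod_update_inr (f : V → V → M) (r : l ⊕ l → V) (a : l) (z : V) :
    ∏ i, f (Function.update r (inr a) z (inl i)) (Function.update r (inr a) z (inr i)) =
      f (r (inl a)) z * ∏ i ∈ Finset.univ.erase a, f (r (inl i)) (r (inr i)) := by
  rw [← Finset.mul_prod_erase _ _ (Finset.mem_univ a)]
  congr 1
  · simp
  · refine Finset.prod_congr rfl fun i hi => ?_
    simp [Finset.ne_of_mem_erase hi]

end PairUpdate

section Pfaffian

variable {l K : Type*} [Fintype l] [DecidableEq l] [Field K]

def pfaffianTerm (A : Matrix (l ⊕ l) (l ⊕ l) K) (σ : Perm (l ⊕ l)) : K :=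
  Perm.sign σ * ∏ i, A (σ (inl i)) (σ (inr i))

lemma pfaffianTerm_mul_swap {A : Matrix (l ⊕ l) (l ⊕ l) K} (hA : Aᵀ = -A)
    (σ : Perm (l ⊕ l)) (a : l) :
    pfaffianTerm A (σ * Equiv.swap (inl a) (inr a)) = pfaffianTerm A σ := by
  have hfactor : ∀ i, A ((σ * Equiv.swap (inl a) (inr a)) (inl i))
      ((σ * Equiv.swap (inl a) (inr a)) (inr i)) =
        (if i = a then -1 else 1) * A (σ (inl i)) (σ (inr i)) := by
    intro i
    by_cases hi : i = a
    · subst hi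
      simpa using congrFun (congrFun hA (σ (inl i))) (σ (inr i))
    · simp [hi, swap_apply_of_ne_of_ne]
  simp only [pfaffianTerm, hfactor, Finset.prod_mul_distrib, Finset.prod_ite_eq',
    Finset.mem_univ, if_true, Perm.sign_mul, Perm.sign_swap inl_ne_inr]
  push_cast
  ring

lemma pfaffianTerm_J_sumCongr (π₁ π₂ : Perm l)
    (h : pfaffianTerm (J l K) (π₁.sumCongr π₂) ≠ 0) :
    pfaffianTerm (J l K) (π₁.sumCongr π₂) = (-1) ^ Fintype.card l := by
  have hπ : π₁ = π₂ := by
    ext i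
    by_contra hi
    exact h (mul_eq_zero_of_right _ (Finset.prod_eq_zero (Finset.mem_univ i) (by simp [hi])))
  subst hπ
  simp [pfaffianTerm, Perm.sign_sumCongr, Finset.prod_const]

lemma pfaffianTerm_J_of_ne_zero {σ : Perm (l ⊕ l)} (h : pfaffianTerm (J l K) σ ≠ 0) :
    pfaffianTerm (J l K) σ = (-1) ^ Fintype.card l := by
  -- A nonzero term sends each pair `{inl i, inr i}` to some pair `{inl k, inr k}`. Swapping
  -- inside pairs does not change the term, and leads to a `σ` mapping `inl` into `inl`.
  suffices key : ∀ (t : Finset l) (σ : Perm (l ⊕ l)), (∀ i ∉ t, (σ (inl i)).isLeft) →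
      pfaffianTerm (J l K) σ ≠ 0 → pfaffianTerm (J l K) σ = (-1) ^ Fintype.card l from
    key Finset.univ σ (by simp) h
  intro t
  induction t using Finset.induction_on with
  | empty =>
    intro σ hσ h
    have hmaps : Set.MapsTo σ (Set.range inl) (Set.range inl) := by
      rintro _ ⟨i, rfl⟩
      obtain ⟨j, hj⟩ := isLeft_iff.mp (hσ i (Finset.notMem_empty i))
      exact ⟨j, hj.symm⟩
    obtain ⟨⟨π₁, π₂⟩, rfl⟩ := Perm.mem_sumCongrHom_range_of_perm_mapsTo_inl hmaps
    exact pfaffianTerm_J_sumCongr π₁ π₂ h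
  | @insert a t _ ih =>
    intro σ hσ h
    by_cases hσa : (σ (inl a)).isLeft
    · exact ih σ (fun i hi => by by_cases hia : i = a <;> simp_all) h
    have hpair : σ (inr a) = (σ (inl a)).swap := by
      refine eq_swap_of_J_apply_ne_zero K fun h0 => h ?_
      exact mul_eq_zero_of_right _ (Finset.prod_eq_zero (Finset.mem_univ a) h0)
    rw [← pfaffianTerm_mul_swap (J_transpose l K) σ a] at h ⊢
    refine ih _ (fun i hi => ?_) h
    by_cases hia : i = a
    · subst hia
      simp_all
    · simp [Equiv.swap_apply_of_ne_of_ne, hia, hσ i (by simp [hia, hi])]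

lemma sum_pfaffianTerm_J_ne_zero [CharZero K] : ∑ σ, pfaffianTerm (J l K) σ ≠ 0 := by
  classical
  have hone : pfaffianTerm (J l K) 1 = (-1) ^ Fintype.card l := by
    simp [pfaffianTerm, Finset.prod_const]
  rw [← Finset.sum_filter_ne_zero, Finset.sum_congr rfl fun σ hσ =>
    pfaffianTerm_J_of_ne_zero (Finset.mem_filter.mp hσ).2, Finset.sum_const, nsmul_eq_mul]
  refine mul_ne_zero (Nat.cast_ne_zero.mpr (Finset.card_ne_zero_of_mem (a := 1) ?_))
    (pow_ne_zero _ (neg_ne_zero.mpr one_ne_zero))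
  simp [hone]

def pairingProduct (B : Matrix (l ⊕ l) (l ⊕ l) K) :
    MultilinearMap K (fun _ : l ⊕ l => l ⊕ l → K) K where
  toFun r := ∏ i, r (inl i) ⬝ᵥ (B *ᵥ r (inr i))
  map_update_add' r a x y := by
    have hl := prod_update_inl (fun u v => u ⬝ᵥ (B *ᵥ v)) r
    have hr := prod_update_inr (fun u v => u ⬝ᵥ (B *ᵥ v)) r
    rcases a with a | a
    · simp only [hl, add_dotProduct, add_mul]
    · simp only [hr, mulVec_add, dotProduct_add, add_mul]
  map_update_smul' r a c x := by
    have hl := prod_update_inl (fun u v => u ⬝ᵥ (B *ᵥ v)) r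
    have hr := prod_update_inr (fun u v => u ⬝ᵥ (B *ᵥ v)) r
    rcases a with a | a
    · simp only [hl, smul_dotProduct, smul_eq_mul, mul_assoc]
    · simp only [hr, mulVec_smul, dotProduct_smul, smul_eq_mul, mul_assoc]

lemma alternatization_pairingProduct (B M : Matrix (l ⊕ l) (l ⊕ l) K) :
    (pairingProduct B).alternatization (fun a => M a) = ∑ σ, pfaffianTerm (M * B * Mᵀ) σ := by
  rw [MultilinearMap.alternatization_apply]
  refine Finset.sum_congr rfl fun σ _ => ?_
  simp [pairingProduct, pfaffianTerm, Units.smul_def, mul_mul_apply]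

theorem sum_pfaffianTerm_conj (B M : Matrix (l ⊕ l) (l ⊕ l) K) :
    ∑ σ, pfaffianTerm (M * B * Mᵀ) σ = M.det * ∑ σ, pfaffianTerm B σ := by
  have h := DFunLike.congr_fun
    ((pairingProduct B).alternatization.eq_smul_basis_det (Pi.basisFun K _)) (fun a => M a)
  rw [AlternatingMap.smul_apply, Pi.basisFun_det_apply, smul_eq_mul,
    alternatization_pairingProduct] at h
  have hbasis : ⇑(Pi.basisFun K (l ⊕ l)) = fun a => (1 : Matrix (l ⊕ l) (l ⊕ l) K) a := by
    ext a b
    simp [one_apply, Pi.single_apply, eq_comm]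
  rw [h, mul_comm, hbasis, alternatization_pairingProduct]
  simp [show (of fun a => M a) = M from rfl]

end Pfaffian

section SkewNormalForm

variable {n K : Type*} [Field K] [CharZero K]

lemma exists_eq_add_vecMulVec_sub {A : Matrix n n K} (hA : Aᵀ = -A) {p q : n}
    (hpq : A p q ≠ 0) :
    ∃ (u v : n → K) (A' : Matrix n n K), A = A' + (vecMulVec u v - vecMulVec v u) ∧
      A'ᵀ = -A' ∧ ∀ x y, A' x y ≠ 0 → x ≠ p ∧ x ≠ q ∧ ∃ z, A x z ≠ 0 := by
  have hskew : ∀ x y, A y x = -A x y := fun x y => by simpa using congr_fun₂ hA x y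
  have hdiag : ∀ x, A x x = 0 := fun x => CharZero.eq_neg_self_iff.mp (hskew x x)
  set u : n → K := fun x => (A p q)⁻¹ * A x p
  set v : n → K := fun x => A x q
  refine ⟨u, v, A - (vecMulVec u v - vecMulVec v u), by abel, ?_,
    fun x y hxy => ⟨?_, ?_, ?_⟩⟩
  · simp only [transpose_sub, hA, transpose_vecMulVec]
    abel
  · rintro rfl
    apply hxy
    simp only [sub_apply, vecMulVec_apply, u, v]
    rw [hskew x y, hdiag]
    field_simp
    ring
  · rintro rfl
    apply hxy
    simp only [sub_apply, vecMulVec_apply, u, v]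
    rw [hskew p x, hskew x y, hdiag]
    field_simp
    ring
  · by_contra! h
    apply hxy
    simp [u, v, h, vecMulVec_apply]

variable [Fintype n] [DecidableEq n]

theorem exists_eq_sum_vecMulVec_sub {k : ℕ} {S : Finset n} {A : Matrix n n K} (hA : Aᵀ = -A)
    (hS : ∀ x y, A x y ≠ 0 → x ∈ S) (hcard : S.card ≤ 2 * k) :
    ∃ u v : Fin k → n → K, A = ∑ j, (vecMulVec (u j) (v j) - vecMulVec (v j) (u j)) := by
  induction k generalizing S A with
  | zero =>
    refine ⟨0, 0, ext fun x y => ?_⟩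
    by_contra hxy
    simpa [Finset.card_eq_zero.mp (Nat.le_zero.mp hcard)] using hS x y hxy
  | succ k ih =>
    by_cases hA0 : A = 0
    · exact ⟨0, 0, by simp [hA0]⟩
    obtain ⟨p, q, hpq⟩ : ∃ p q, A p q ≠ 0 := by
      by_contra! h
      exact hA0 (ext h)
    obtain ⟨u, v, A', hAA', hA', hA'row⟩ := exists_eq_add_vecMulVec_sub hA hpq
    have hS' : ∀ x y, A' x y ≠ 0 → x ∈ (S.erase p).erase q := fun x y hxy => by
      obtain ⟨hxp, hxq, z, hz⟩ := hA'row x y hxy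
      exact Finset.mem_erase.mpr ⟨hxq, Finset.mem_erase.mpr ⟨hxp, hS x z hz⟩⟩
    have hqp : q ∈ S.erase p := by
      have hAqp : A q p = -A p q := by simpa using congr_fun₂ hA p q
      refine Finset.mem_erase.mpr ⟨?_, hS q p (by rw [hAqp]; exact neg_ne_zero.mpr hpq)⟩
      rintro rfl
      exact hpq (CharZero.eq_neg_self_iff.mp hAqp)
    obtain ⟨u', v', hA'sum⟩ := ih hA' hS' (by
      rw [Finset.card_erase_of_mem hqp, Finset.card_erase_of_mem (hS p q hpq)]
      omega)
    refine ⟨Fin.cons u u', Fin.cons v v', ?_⟩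
    rw [hAA', hA'sum, Fin.sum_univ_succ, add_comm]
    simp only [Fin.cons_zero, Fin.cons_succ]

theorem exists_eq_mul_J_mul_transpose {l : Type*} [Fintype l] [DecidableEq l]
    {A : Matrix (l ⊕ l) (l ⊕ l) K} (hA : Aᵀ = -A) :
    ∃ M : Matrix (l ⊕ l) (l ⊕ l) K, A = M * J l K * Mᵀ := by
  obtain ⟨u, v, huv⟩ := exists_eq_sum_vecMulVec_sub (k := Fintype.card l) (S := Finset.univ) hA
    (fun x _ _ => Finset.mem_univ x) (by simp [two_mul])
  let e := Fintype.equivFin l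
  refine ⟨of fun a => Sum.elim (fun i => v (e i) a) (fun i => u (e i) a), ?_⟩
  rw [mul_J_mul_transpose, huv, ← e.sum_comp]
  rfl

end SkewNormalForm

section PfaffianPolynomial

variable {l K : Type*} [Fintype l] [DecidableEq l] [Field K]

-- Normalized by its value at `J`, which is `(-1) ^ m * 2 ^ m * m!` for `m = card l`; only its
-- nonvanishing is needed.
variable (l K) in
noncomputable def pfaffian : MvPolynomial ((l ⊕ l) × (l ⊕ l)) K :=
  C (∑ σ, pfaffianTerm (J l K) σ)⁻¹ *
    ∑ σ : Perm (l ⊕ l), C (Perm.sign σ : K) * ∏ i, X (σ (inl i), σ (inr i))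

lemma eval_pfaffian (A : Matrix (l ⊕ l) (l ⊕ l) K) :
    eval (fun p => A p.1 p.2) (pfaffian l K) =
      (∑ σ, pfaffianTerm (J l K) σ)⁻¹ * ∑ σ, pfaffianTerm A σ := by
  simp [pfaffian, pfaffianTerm]

lemma eval_pfaffian_mul_mul_transpose (M B : Matrix (l ⊕ l) (l ⊕ l) K) :
    eval (fun p => (M * B * Mᵀ) p.1 p.2) (pfaffian l K) =
      M.det * eval (fun p => B p.1 p.2) (pfaffian l K) := by
  rw [eval_pfaffian, eval_pfaffian, sum_pfaffianTerm_conj]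
  ring

lemma eval_pfaffian_J [CharZero K] : eval (fun p => J l K p.1 p.2) (pfaffian l K) = 1 := by
  rw [eval_pfaffian]
  exact inv_mul_cancel₀ sum_pfaffianTerm_J_ne_zero

lemma eval_pfaffian_smul (s : K) (A : Matrix (l ⊕ l) (l ⊕ l) K) :
    eval (fun p => (s • A) p.1 p.2) (pfaffian l K) =
      s ^ Fintype.card l * eval (fun p => A p.1 p.2) (pfaffian l K) := by
  rw [eval_pfaffian, eval_pfaffian, Finset.mul_sum, Finset.mul_sum, Finset.mul_sum]
  refine Finset.sum_congr rfl fun σ _ => ?_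
  simp only [pfaffianTerm, smul_apply, smul_eq_mul, Finset.prod_mul_distrib, Finset.prod_const,
    Finset.card_univ]
  ring

lemma eval_pfaffian_smul_conj (s : K) (g : SpecialLinearGroup (l ⊕ l) K)
    (A : Matrix (l ⊕ l) (l ⊕ l) K) :
    eval (fun p => (s • (g.1 * A * g.1ᵀ)) p.1 p.2) (pfaffian l K) =
      s ^ Fintype.card l * eval (fun p => A p.1 p.2) (pfaffian l K) := by
  rw [eval_pfaffian_smul, eval_pfaffian_mul_mul_transpose, g.2, one_mul]

theorem sq_eval_pfaffian [CharZero K] {A : Matrix (l ⊕ l) (l ⊕ l) K} (hA : Aᵀ = -A) :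
    eval (fun p => A p.1 p.2) (pfaffian l K) ^ 2 = A.det := by
  obtain ⟨M, rfl⟩ := exists_eq_mul_J_mul_transpose hA
  rw [eval_pfaffian_mul_mul_transpose, eval_pfaffian_J, det_mul, det_mul, det_transpose,
    SymplecticGroup.det_eq_one (SymplecticGroup.J_mem l K)]
  ring

end PfaffianPolynomial

section Transvection

variable {l R K : Type*} [Fintype l] [DecidableEq l] [CommRing R] [Field K]

lemma dotProduct_J_mulVec_self (w : l ⊕ l → R) : w ⬝ᵥ (J l R *ᵥ w) = 0 := by
  simp [dotProduct, mulVec, Fintype.sum_sum_type, J, one_apply, mul_comm]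

lemma J_mulVec_ne_zero {w : l ⊕ l → R} (hw : w ≠ 0) : J l R *ᵥ w ≠ 0 := by
  intro h
  apply hw
  simpa [J_squared, neg_mulVec] using congr_arg (J l R *ᵥ ·) h

lemma vecMul_J_ne_zero {w : l ⊕ l → R} (hw : w ≠ 0) : w ᵥ* J l R ≠ 0 := by
  intro h
  apply hw
  simpa [J_squared, vecMul_neg] using congr_arg (· ᵥ* J l R) h

noncomputable def symplecticTransvection (c : R) (w : l ⊕ l → R) :
    Matrix (l ⊕ l) (l ⊕ l) R :=
  1 + c • vecMulVec w (J l R *ᵥ w)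

lemma symplecticTransvection_mem (c : R) (w : l ⊕ l → R) :
    symplecticTransvection c w ∈ symplecticGroup l R := by
  have hJJ : (J l R *ᵥ w) ᵥ* J l R = w := by
    rw [← vecMul_transpose, J_transpose, vecMul_neg, neg_vecMul, vecMul_vecMul, J_squared,
      vecMul_neg, vecMul_one, neg_neg]
  have hJ : J l R *ᵥ (J l R *ᵥ w) = -w := by
    rw [mulVec_mulVec, J_squared, neg_mulVec, one_mulVec]
  rw [SymplecticGroup.mem_iff, symplecticTransvection, transpose_add, transpose_smul,
    transpose_vecMulVec, transpose_one]
  have hEJ : vecMulVec w (J l R *ᵥ w) * J l R = vecMulVec w w := by rw [vecMulVec_mul, hJJ]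
  have hJEt : J l R * vecMulVec (J l R *ᵥ w) w = -vecMulVec w w := by
    rw [mul_vecMulVec, hJ, neg_vecMulVec]
  have hWEt : vecMulVec w w * vecMulVec (J l R *ᵥ w) w = 0 := by
    rw [vecMulVec_mul_vecMulVec, dotProduct_J_mulVec_self, zero_smul, vecMulVec_zero]
  simp [add_mul, hEJ, mul_add, hJEt, hWEt]

lemma symplecticTransvection_mulVec (c : R) (w a : l ⊕ l → R) :
    symplecticTransvection c w *ᵥ a = a + (c * (a ⬝ᵥ (J l R *ᵥ w))) • w := by
  rw [symplecticTransvection, add_mulVec, one_mulVec, smul_mulVec, vecMulVec_mulVec,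
    op_smul_eq_smul, smul_smul, dotProduct_comm]

lemma exists_symplectic_mulVec_eq_of_dotProduct_ne_zero {a b : l ⊕ l → K}
    (hab : a ⬝ᵥ (J l K *ᵥ b) ≠ 0) :
    ∃ h ∈ symplecticGroup l K, h *ᵥ a = b := by
  refine ⟨symplecticTransvection (a ⬝ᵥ (J l K *ᵥ b))⁻¹ (b - a),
    symplecticTransvection_mem _ _, ?_⟩
  rw [symplecticTransvection_mulVec, mulVec_sub, dotProduct_sub, dotProduct_J_mulVec_self,
    sub_zero, inv_mul_cancel₀ hab, one_smul, add_sub_cancel]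

lemma exists_dotProduct_ne_zero_and_dotProduct_ne_zero {ι : Type*} [Fintype ι] [DecidableEq ι]
    {α β : ι → K} (hα : α ≠ 0) (hβ : β ≠ 0) :
    ∃ z, α ⬝ᵥ z ≠ 0 ∧ β ⬝ᵥ z ≠ 0 := by
  obtain ⟨i, hi⟩ := Function.ne_iff.mp hα
  obtain ⟨j, hj⟩ := Function.ne_iff.mp hβ
  by_cases hβi : β i = 0
  · by_cases hαj : α j = 0
    · exact ⟨Pi.single i 1 + Pi.single j 1, by simp_all [dotProduct_add]⟩
    · exact ⟨Pi.single j 1, by simp_all⟩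
  · exact ⟨Pi.single i 1, by simp_all⟩

theorem exists_symplectic_mulVec_eq {a b : l ⊕ l → K} (ha : a ≠ 0) (hb : b ≠ 0) :
    ∃ h ∈ symplecticGroup l K, h *ᵥ a = b := by
  by_cases hab : a ⬝ᵥ (J l K *ᵥ b) ≠ 0
  · exact exists_symplectic_mulVec_eq_of_dotProduct_ne_zero hab
  obtain ⟨z, haz, hzb⟩ :=
    exists_dotProduct_ne_zero_and_dotProduct_ne_zero (vecMul_J_ne_zero ha) (J_mulVec_ne_zero hb)
  rw [← dotProduct_mulVec] at haz
  rw [dotProduct_comm] at hzb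
  obtain ⟨h₁, hh₁, rfl⟩ := exists_symplectic_mulVec_eq_of_dotProduct_ne_zero haz
  obtain ⟨h₂, hh₂, rfl⟩ := exists_symplectic_mulVec_eq_of_dotProduct_ne_zero hzb
  exact ⟨h₂ * h₁, mul_mem hh₂ hh₁, (mulVec_mulVec _ _ _).symm⟩

end Transvection

section BlockEmbedding

variable {l l' k R : Type*} [DecidableEq l] [DecidableEq l'] [DecidableEq k] [CommRing R]
  (e : l ⊕ l' ≃ k)

def sumSumEquiv : (l ⊕ l) ⊕ (l' ⊕ l') ≃ k ⊕ k :=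
  (sumSumSumComm l l l' l').trans (sumCongr e e)

lemma reindex_fromBlocks_J :
    reindex (sumSumEquiv e) (sumSumEquiv e) (fromBlocks (J l R) 0 0 (J l' R)) = J k R := by
  ext a b
  obtain ⟨x, rfl⟩ := (sumSumEquiv e).surjective a
  obtain ⟨y, rfl⟩ := (sumSumEquiv e).surjective b
  rcases x with (i | i) | (i | i) <;> rcases y with (j | j) | (j | j) <;>
    simp [sumSumEquiv, one_apply, e.injective.eq_iff]

variable [Fintype l] [Fintype l'] [Fintype k]

lemma reindex_fromBlocks_one_mem {u : Matrix (l ⊕ l) (l ⊕ l) R}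
    (hu : u ∈ symplecticGroup l R) :
    reindex (sumSumEquiv e) (sumSumEquiv e) (fromBlocks u 0 0 1) ∈ symplecticGroup k R := by
  rw [SymplecticGroup.mem_iff] at hu ⊢
  rw [← reindex_fromBlocks_J e (R := R)]
  simp only [reindex_apply, submatrix_mul_equiv, transpose_submatrix, fromBlocks_transpose,
    fromBlocks_multiply]
  simp [hu]

def symplecticBlockEmbedding : symplecticGroup l R →* symplecticGroup k R where
  toFun u := ⟨_, reindex_fromBlocks_one_mem e u.2⟩
  map_one' := by ext1; simp
  map_mul' u v := by
    ext1
    simp [submatrix_mul_equiv, fromBlocks_multiply]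

lemma symplecticBlockEmbedding_injective :
    Function.Injective (symplecticBlockEmbedding e (R := R)) := by
  intro u v huv
  have h := (reindex _ _).injective (congr_arg Subtype.val huv)
  exact Subtype.ext (fromBlocks_inj.mp h).1

lemma symplecticBlockEmbedding_mulVec_single (u : symplecticGroup l R) (c : l' ⊕ l') :
    (symplecticBlockEmbedding e u : Matrix (k ⊕ k) (k ⊕ k) R) *ᵥ
        Pi.single (sumSumEquiv e (inr c)) 1 =
      Pi.single (sumSumEquiv e (inr c)) 1 := by
  ext a
  obtain ⟨x, rfl⟩ := (sumSumEquiv e).surjective a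
  rcases x with x | x <;>
    simp [symplecticBlockEmbedding, mulVec_single, one_apply, Pi.single_apply]

variable (l R) in
def symplecticToSpecialLinear : symplecticGroup l R →* SpecialLinearGroup (l ⊕ l) R where
  toFun u := ⟨u, SymplecticGroup.det_eq_one u.2⟩
  map_one' := rfl
  map_mul' _ _ := rfl

@[simp]
lemma coe_symplecticToSpecialLinear (u : symplecticGroup l R) :
    (symplecticToSpecialLinear l R u : Matrix (l ⊕ l) (l ⊕ l) R) = u :=
  rfl

end BlockEmbedding

section Orbit

variable {K : Type*} [Field K] [IsAlgClosed K]

lemma exists_eq_smul_specialLinearGroup {n : Type*} [Fintype n] [DecidableEq n] [Nonempty n]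
    {N : Matrix n n K} (hN : N.det ≠ 0) :
    ∃ (c : Kˣ) (g : SpecialLinearGroup n K), N = (c : K) • g.1 := by
  have hcard : 0 < Fintype.card n := Fintype.card_pos
  obtain ⟨c, hc⟩ := IsAlgClosed.exists_pow_nat_eq N.det hcard
  have hc0 : c ≠ 0 := by
    rintro rfl
    exact hN (by rw [← hc, zero_pow hcard.ne'])
  refine ⟨Units.mk0 c hc0, ⟨c⁻¹ • N, by rw [det_smul, inv_pow, hc, inv_mul_cancel₀ hN]⟩,
    ?_⟩
  simp [smul_smul, mul_inv_cancel₀ hc0]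

variable [CharZero K] {l : Type*} [Fintype l] [DecidableEq l]

theorem exists_smul_mul_J_mul_transpose_eq {w x : l ⊕ l → K} (hw : w ≠ 0) (hx : x ≠ 0)
    {A : Matrix (l ⊕ l) (l ⊕ l) K} (hA : Aᵀ = -A) (hdet : A.det ≠ 0) :
    ∃ (s t : Kˣ) (g : SpecialLinearGroup (l ⊕ l) K),
      (s : K) • (g.1 * J l K * g.1ᵀ) = A ∧ (t : K) • (g.1 *ᵥ w) = x := by
  obtain ⟨M, rfl⟩ := exists_eq_mul_J_mul_transpose hA
  have hM : M.det ≠ 0 := fun h => hdet (by simp [h])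
  have hMx : M *ᵥ (M⁻¹ *ᵥ x) = x := by
    rw [mulVec_mulVec, mul_nonsing_inv _ (Ne.isUnit hM), one_mulVec]
  obtain ⟨h, hh, hhw⟩ := exists_symplectic_mulVec_eq hw (b := M⁻¹ *ᵥ x)
    (fun h0 => hx (by rw [← hMx, h0, mulVec_zero]))
  obtain ⟨i, -⟩ := Function.ne_iff.mp hw
  have : Nonempty (l ⊕ l) := ⟨i⟩
  obtain ⟨c, g, hg⟩ := exists_eq_smul_specialLinearGroup (N := M * h)
    (by rwa [det_mul, SymplecticGroup.det_eq_one hh, mul_one])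
  refine ⟨c ^ 2, c, g, ?_, ?_⟩
  · have hconj := congr_arg (fun N => N * J l K * Nᵀ) hg
    simp only [transpose_smul, smul_mul, Matrix.mul_smul, smul_smul] at hconj
    rw [Units.val_pow_eq_pow_val, sq, ← hconj, transpose_mul]
    calc M * h * J l K * (hᵀ * Mᵀ) = M * (h * J l K * hᵀ) * Mᵀ := by
          simp only [Matrix.mul_assoc]
      _ = M * J l K * Mᵀ := by rw [SymplecticGroup.mem_iff.mp hh]
  · rw [← smul_mulVec, ← hg, ← mulVec_mulVec, hhw, hMx]

end Orbit

section Density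

variable {l K : Type*} [Fintype l] [DecidableEq l] [Field K]

lemma finite_setOf_det_add_smul_J_eq_zero (A : Matrix (l ⊕ l) (l ⊕ l) K) :
    {ε : K | (A + ε • J l K).det = 0}.Finite := by
  have hdet : ∀ ε : K, (A + ε • J l K).det = (A * J l K).charpoly.eval ε * (J l K).det := by
    intro ε
    rw [eval_charpoly, ← det_mul, sub_mul, Matrix.mul_assoc, J_squared, scalar_apply,
      ← smul_eq_diagonal_mul]
    simp [add_comm]
  simp only [hdet, mul_eq_zero, (isUnit_det_J l K).ne_zero, or_false]
  exact Polynomial.finite_setOfPred_isRoot (charpoly_monic _).ne_zero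

lemma finite_setOf_add_smul_eq_zero {ι : Type*} (x : ι → K) {w : ι → K} (hw : w ≠ 0) :
    {ε : K | x + ε • w = 0}.Finite := by
  refine Set.Subsingleton.finite fun ε₁ h₁ ε₂ h₂ => ?_
  have h : (ε₁ - ε₂) • w = 0 := by
    rw [sub_smul]
    exact sub_eq_zero.mpr ((add_right_inj x).mp (h₁.trans h₂.symm))
  exact sub_eq_zero.mp ((smul_eq_zero.mp h).resolve_right hw)

theorem eval_eq_zero_of_forall_det_ne_zero [Infinite K] [Nonempty l]
    {Q : MvPolynomial ((l ⊕ l) × (l ⊕ l) ⊕ (l ⊕ l)) K}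
    (hQ : ∀ (A : Matrix (l ⊕ l) (l ⊕ l) K) (x : l ⊕ l → K),
      Aᵀ = -A → A.det ≠ 0 → x ≠ 0 →
      eval (Sum.elim (fun p => A p.1 p.2) x) Q = 0)
    {A : Matrix (l ⊕ l) (l ⊕ l) K} (hA : Aᵀ = -A) (x : l ⊕ l → K) :
    eval (Sum.elim (fun p => A p.1 p.2) x) Q = 0 := by
  obtain ⟨w, hw⟩ : ∃ w : l ⊕ l → K, w ≠ 0 :=
    ⟨Pi.single (inl (Classical.arbitrary l)) 1, by simp⟩
  let θ : Polynomial K := aeval (Sum.elim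
    (fun p => Polynomial.C (A p.1 p.2) + Polynomial.C (J l K p.1 p.2) * Polynomial.X)
    (fun i => Polynomial.C (x i) + Polynomial.C (w i) * Polynomial.X)) Q
  have hθ : ∀ ε, θ.eval ε =
      eval (Sum.elim (fun p => (A + ε • J l K) p.1 p.2) (x + ε • w)) Q := by
    intro ε
    rw [← Polynomial.coe_aeval_eq_eval, comp_aeval_apply]
    refine congr_arg (eval · Q) (funext fun s => ?_)
    rcases s with p | i <;>
      simp only [Polynomial.coe_aeval_eq_eval, Sum.elim_inl, Sum.elim_inr, Polynomial.eval_add,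
        Polynomial.eval_mul, Polynomial.eval_C, Polynomial.eval_X, add_apply, smul_apply,
        Pi.add_apply, Pi.smul_apply, smul_eq_mul, mul_comm]
  have hroots :
      {ε | (A + ε • J l K).det = 0 ∨ x + ε • w = 0}ᶜ ⊆ {ε | θ.IsRoot ε} := by
    intro ε hε
    simp only [Set.mem_compl_iff, Set.mem_ofPred_eq, not_or] at hε
    refine (hθ ε).trans (hQ _ _ ?_ hε.1 hε.2)
    simp [hA, J_transpose, add_comm]
  have hθ0 : θ = 0 := Polynomial.eq_zero_of_infinite_isRoot θ <|
    ((finite_setOf_det_add_smul_J_eq_zero A).union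
      (finite_setOf_add_smul_eq_zero x hw)).infinite_compl.mono hroots
  simpa [hθ0] using (hθ 0).symm

end Density

end Matrix

/-- Ks II-4 (`n ≥ 2`): for the action of `GL₁² × SL 2n` on
`⋀² ℂ²ⁿ ⊕ ℂ²ⁿ` (alternating matrices with congruence action plus the vector
action), `(s, t, g) · (A, x) = (s • g A gᵀ, t • g x)`, the Pfaffian
`f(A, x) = Pf A` is a relative invariant (with character `sⁿ`, since
`det g = 1`), the stabilizer of a generic point contains a subgroup isomorphic
to `Sp (2n-2) ℂ`, and the set `{(A, x) | Pf A ≠ 0, x ≠ 0}` contains a dense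
orbit. -/
theorem ks_II_4_prehomogeneous (n : ℕ) (hn : 2 ≤ n) :
    ∃ P : MvPolynomial ((Fin n ⊕ Fin n) × (Fin n ⊕ Fin n)) ℂ,
      (∀ A : Matrix (Fin n ⊕ Fin n) (Fin n ⊕ Fin n) ℂ, Aᵀ = -A →
        (eval (fun p => A p.1 p.2) P) ^ 2 = A.det) ∧
      eval (fun p => Matrix.J (Fin n) ℂ p.1 p.2) P = 1 ∧
      (∀ (s : ℂˣ) (g : SpecialLinearGroup (Fin n ⊕ Fin n) ℂ)
          (A : Matrix (Fin n ⊕ Fin n) (Fin n ⊕ Fin n) ℂ), Aᵀ = -A →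
        eval (fun p => ((s : ℂ) • (g.1 * A * g.1ᵀ)) p.1 p.2) P
          = (s : ℂ) ^ n * eval (fun p => A p.1 p.2) P) ∧
      (∃ (v : Matrix (Fin n ⊕ Fin n) (Fin n ⊕ Fin n) ℂ × (Fin n ⊕ Fin n → ℂ))
          (φ : ↥(Matrix.symplecticGroup (Fin (n - 1)) ℂ) →*
            (ℂˣ × ℂˣ × SpecialLinearGroup (Fin n ⊕ Fin n) ℂ)),
        v.1ᵀ = -v.1 ∧ eval (fun p => v.1 p.1 p.2) P ≠ 0 ∧ v.2 ≠ 0 ∧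
        Function.Injective φ ∧
        (∀ u : ↥(Matrix.symplecticGroup (Fin (n - 1)) ℂ),
          ((φ u).1 : ℂ) • ((φ u).2.2.1 * v.1 * (φ u).2.2.1ᵀ) = v.1 ∧
          ((φ u).2.1 : ℂ) • ((φ u).2.2.1 *ᵥ v.2) = v.2)) ∧
      (∃ v : Matrix (Fin n ⊕ Fin n) (Fin n ⊕ Fin n) ℂ × (Fin n ⊕ Fin n → ℂ),
        v.1ᵀ = -v.1 ∧ eval (fun p => v.1 p.1 p.2) P ≠ 0 ∧ v.2 ≠ 0 ∧
        (∀ (s t : ℂˣ) (g : SpecialLinearGroup (Fin n ⊕ Fin n) ℂ),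
          eval (fun p => ((s : ℂ) • (g.1 * v.1 * g.1ᵀ)) p.1 p.2) P ≠ 0 ∧
          (t : ℂ) • (g.1 *ᵥ v.2) ≠ 0) ∧
        (∀ Q : MvPolynomial ((Fin n ⊕ Fin n) × (Fin n ⊕ Fin n) ⊕ (Fin n ⊕ Fin n)) ℂ,
          (∀ (s t : ℂˣ) (g : SpecialLinearGroup (Fin n ⊕ Fin n) ℂ),
            eval (Sum.elim (fun p => ((s : ℂ) • (g.1 * v.1 * g.1ᵀ)) p.1 p.2)
              (fun i => ((t : ℂ) • (g.1 *ᵥ v.2)) i)) Q = 0) →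
          ∀ (A : Matrix (Fin n ⊕ Fin n) (Fin n ⊕ Fin n) ℂ) (x : Fin n ⊕ Fin n → ℂ),
            Aᵀ = -A →
            eval (Sum.elim (fun p => A p.1 p.2) x) Q = 0)) := by
  have hn1 : n - 1 + 1 = n := by omega
  let e : Fin (n - 1) ⊕ Fin 1 ≃ Fin n := finSumFinEquiv.trans (finCongr hn1)
  -- a basis vector of the hyperbolic plane indexed by `Fin 1`, fixed by the embedded `Sp (2n-2)`
  let v : Fin n ⊕ Fin n → ℂ := Pi.single (sumSumEquiv e (inr (inl 0))) 1
  have hv : v ≠ 0 := by simp [v]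
  have : Nonempty (Fin n) := ⟨⟨0, by omega⟩⟩
  have hPf_J : eval (fun p => J (Fin n) ℂ p.1 p.2) (pfaffian (Fin n) ℂ) ≠ 0 := by
    simp [eval_pfaffian_J]
  refine ⟨pfaffian (Fin n) ℂ, fun A hA => sq_eval_pfaffian hA, eval_pfaffian_J,
    fun s g A _ => by rw [eval_pfaffian_smul_conj, Fintype.card_fin], ?_, ?_⟩
  · refine ⟨(J (Fin n) ℂ, v), MonoidHom.prod 1 (MonoidHom.prod 1
      ((symplecticToSpecialLinear (Fin n) ℂ).comp (symplecticBlockEmbedding e))),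
      J_transpose _ _, hPf_J, hv, fun u u' h => ?_, fun u => ⟨?_, ?_⟩⟩
    · exact symplecticBlockEmbedding_injective e (Subtype.ext (congr_arg (·.2.2.1) h))
    · simpa using SymplecticGroup.mem_iff.mp (symplecticBlockEmbedding e u).2
    · simpa [v] using symplecticBlockEmbedding_mulVec_single e u (inl 0)
  · refine ⟨(J (Fin n) ℂ, v), J_transpose _ _, hPf_J, hv, fun s t g => ⟨?_, ?_⟩,
      fun Q hQ A x hA => ?_⟩
    · rw [eval_pfaffian_smul_conj, eval_pfaffian_J, mul_one]
      exact pow_ne_zero _ s.ne_zero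
    · exact smul_ne_zero t.ne_zero
        (by simpa using (mulVec_injective_of_det_ne_zero (by simp : g.1.det ≠ 0)).ne hv)
    · refine eval_eq_zero_of_forall_det_ne_zero (fun A x hA hdet hx => ?_) hA x
      obtain ⟨s, t, g, rfl, rfl⟩ := exists_smul_mul_J_mul_transpose_eq hv hx hA hdet
      exact hQ s t g
end
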